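/- arXiv:1604.07929 — 5 statements merged into one kernel-verified Lean document; each statement's English description precedes it below -/
import Mathlib

section
/- The discriminant Δ vanishes to fourth order along the diagonal: for every a in (0,1), the first, second, and third partial derivatives of Δ(a,d) with respect to d, evaluated at d = a, are all zero (hence, together with Δ(a,a) = 0, the analytic function Δ(a,d) is divisible by (a − d)⁴). -/
open Real

noncomputable def So (z : ℝ) : ℝ := -(1/2) * (z * Real.log z + (1 - z) * Real.log (1 - z))

noncomputable def So' (z : ℝ) : ℝ := -(1/2) * Real.log (z / (1 - z))

noncomputable def So'' (z : ℝ) : ℝ := -(1/2) * (1/z + 1/(1 - z))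

noncomputable def A (a d : ℝ) : ℝ := (1/2) * So'' a * (a - d)^2 - a * (So' a - So' d)

noncomputable def B (a d : ℝ) : ℝ := -2 * (a + d) * (So' a - So' d)

noncomputable def C (a d : ℝ) : ℝ := 4 * (So a - a * So' a - So d + d * So' d)

noncomputable def Δ (a d : ℝ) : ℝ := B a d ^ 2 - 4 * A a d * C a d

noncomputable def So3 (z : ℝ) : ℝ := -(1/2) * (-(z^2)⁻¹ + ((1-z)^2)⁻¹)
noncomputable def So4 (z : ℝ) : ℝ := -(1/2) * (2*(z^3)⁻¹ + 2*((1-z)^3)⁻¹)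

noncomputable def A1 (a d : ℝ) : ℝ := -(So'' a) * (a - d) + a * So'' d
noncomputable def A2 (a d : ℝ) : ℝ := So'' a + a * So3 d
noncomputable def A3 (a d : ℝ) : ℝ := a * So4 d
noncomputable def B1 (a d : ℝ) : ℝ := -2 * (So' a - So' d) + 2*(a+d) * So'' d
noncomputable def B2 (a d : ℝ) : ℝ := 4 * So'' d + 2*(a+d) * So3 d
noncomputable def B3 (a d : ℝ) : ℝ := 6 * So3 d + 2*(a+d) * So4 d
noncomputable def C1 (a d : ℝ) : ℝ := 4 * d * So'' d
noncomputable def C2 (a d : ℝ) : ℝ := 4 * So'' d + 4 * d * So3 d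
noncomputable def C3 (a d : ℝ) : ℝ := 8 * So3 d + 4 * d * So4 d

noncomputable def D1 (a d : ℝ) : ℝ := 2 * B a d * B1 a d - 4 * (A1 a d * C a d + A a d * C1 a d)
noncomputable def D2 (a d : ℝ) : ℝ :=
  2 * (B1 a d)^2 + 2 * B a d * B2 a d
    - 4 * (A2 a d * C a d + 2 * A1 a d * C1 a d + A a d * C2 a d)
noncomputable def D3 (a d : ℝ) : ℝ :=
  6 * B1 a d * B2 a d + 2 * B a d * B3 a d
    - 4 * (A3 a d * C a d + 3 * A2 a d * C1 a d + 3 * A1 a d * C2 a d + A a d * C3 a d)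

section derivs

variable {z : ℝ}

lemma one_sub_pos' (hz : z ∈ Set.Ioo (0:ℝ) 1) : (0:ℝ) < 1 - z := by
  have := hz.2; linarith

lemma hasDerivAt_So (hz : z ∈ Set.Ioo (0:ℝ) 1) : HasDerivAt So (So' z) z := by
  have hz0 := hz.1.ne'
  have hz1 := (one_sub_pos' hz).ne'
  have hu : HasDerivAt (fun z : ℝ => 1 - z) (-1) z := by
    simpa using (hasDerivAt_id z).const_sub 1
  have h1 : HasDerivAt (fun z : ℝ => z * Real.log z) (1 * Real.log z + z * z⁻¹) z :=
    (hasDerivAt_id z).mul (Real.hasDerivAt_log hz0)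
  have h2 : HasDerivAt (fun z : ℝ => Real.log (1 - z)) ((1-z)⁻¹ * (-1)) z :=
    (Real.hasDerivAt_log hz1).comp z hu
  have h3 : HasDerivAt (fun z : ℝ => (1-z) * Real.log (1-z))
      ((-1) * Real.log (1-z) + (1-z) * ((1-z)⁻¹ * (-1))) z := hu.mul h2
  have h : HasDerivAt (fun z : ℝ => -(1/2) * (z * Real.log z + (1-z) * Real.log (1-z)))
      (-(1/2) * ((1 * Real.log z + z * z⁻¹) + ((-1) * Real.log (1-z) + (1-z) * ((1-z)⁻¹ * (-1))))) z :=
    (h1.add h3).const_mul _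
  have hfun : So = fun z : ℝ => -(1/2) * (z * Real.log z + (1-z) * Real.log (1-z)) :=
    funext fun x => by rw [So]
  have hval : So' z
      = -(1/2) * ((1 * Real.log z + z * z⁻¹) + ((-1) * Real.log (1-z) + (1-z) * ((1-z)⁻¹ * (-1)))) := by
    rw [So', Real.log_div hz0 hz1, mul_inv_cancel₀ hz0, ← mul_assoc, mul_inv_cancel₀ hz1]
    ring
  rw [hfun, hval]; exact h

lemma hasDerivAt_So' (hz : z ∈ Set.Ioo (0:ℝ) 1) : HasDerivAt So' (So'' z) z := by
  have hz0 := hz.1.ne'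
  have hz1 := (one_sub_pos' hz).ne'
  have hu : HasDerivAt (fun z : ℝ => 1 - z) (-1) z := by
    simpa using (hasDerivAt_id z).const_sub 1
  have h2 : HasDerivAt (fun z : ℝ => Real.log (1 - z)) ((1-z)⁻¹ * (-1)) z :=
    (Real.hasDerivAt_log hz1).comp z hu
  have h : HasDerivAt (fun z : ℝ => -(1/2) * (Real.log z - Real.log (1 - z)))
      (-(1/2) * (z⁻¹ - (1-z)⁻¹ * (-1))) z :=
    ((Real.hasDerivAt_log hz0).sub h2).const_mul _
  have heq : So' =ᶠ[nhds z] fun z : ℝ => -(1/2) * (Real.log z - Real.log (1 - z)) := by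
    filter_upwards [isOpen_Ioo.mem_nhds hz] with w hw
    rw [So', Real.log_div hw.1.ne' (one_sub_pos' hw).ne']
  refine HasDerivAt.congr_of_eventuallyEq ?_ heq
  have hval : So'' z = -(1/2) * (z⁻¹ - (1-z)⁻¹ * (-1)) := by
    rw [So'', one_div, one_div]; ring
  rw [hval]; exact h

lemma hasDerivAt_So'' (hz : z ∈ Set.Ioo (0:ℝ) 1) : HasDerivAt So'' (So3 z) z := by
  have hz0 := hz.1.ne'
  have hz1 := (one_sub_pos' hz).ne'
  have hu : HasDerivAt (fun z : ℝ => 1 - z) (-1) z := by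
    simpa using (hasDerivAt_id z).const_sub 1
  have h1 : HasDerivAt (fun z : ℝ => z⁻¹) (-(z^2)⁻¹) z := hasDerivAt_inv hz0
  have h2 : HasDerivAt (fun z : ℝ => (1-z)⁻¹) (-((1-z)^2)⁻¹ * (-1)) z :=
    (hasDerivAt_inv hz1).comp z hu
  have h : HasDerivAt (fun z : ℝ => -(1/2) * (z⁻¹ + (1-z)⁻¹))
      (-(1/2) * (-(z^2)⁻¹ + -((1-z)^2)⁻¹ * (-1))) z := (h1.add h2).const_mul _
  have hfun : So'' = fun z : ℝ => -(1/2) * (z⁻¹ + (1-z)⁻¹) :=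
    funext fun x => by rw [So'']; ring
  have hval : So3 z = -(1/2) * (-(z^2)⁻¹ + -((1-z)^2)⁻¹ * (-1)) := by
    rw [So3]; ring
  rw [hfun, hval]; exact h

lemma hasDerivAt_So3 (hz : z ∈ Set.Ioo (0:ℝ) 1) : HasDerivAt So3 (So4 z) z := by
  have hz0 := hz.1.ne'
  have hz1 := (one_sub_pos' hz).ne'
  have hu : HasDerivAt (fun z : ℝ => 1 - z) (-1) z := by
    simpa using (hasDerivAt_id z).const_sub 1
  have h1 : HasDerivAt (fun z : ℝ => (z^2)⁻¹) (-(2 * z ^ 1) / (z^2)^2) z :=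
    (hasDerivAt_pow 2 z).inv (pow_ne_zero 2 hz0)
  have h2' : HasDerivAt (fun z : ℝ => (1-z)^2) (2 * (1-z) ^ 1 * (-1)) z := hu.pow 2
  have h2 : HasDerivAt (fun z : ℝ => ((1-z)^2)⁻¹) (-(2 * (1-z) ^ 1 * (-1)) / ((1-z)^2)^2) z :=
    h2'.inv (pow_ne_zero 2 hz1)
  have h : HasDerivAt (fun z : ℝ => -(1/2) * (-(z^2)⁻¹ + ((1-z)^2)⁻¹))
      (-(1/2) * (-(-(2 * z ^ 1) / (z^2)^2) + -(2 * (1-z) ^ 1 * (-1)) / ((1-z)^2)^2)) z :=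
    (h1.neg.add h2).const_mul _
  have hfun : So3 = fun z : ℝ => -(1/2) * (-(z^2)⁻¹ + ((1-z)^2)⁻¹) :=
    funext fun x => by rw [So3]
  have hval : So4 z
      = -(1/2) * (-(-(2 * z ^ 1) / (z^2)^2) + -(2 * (1-z) ^ 1 * (-1)) / ((1-z)^2)^2) := by
    rw [So4]
    have e1 : -(-(2 * z ^ 1) / (z^2)^2) = 2*(z^3)⁻¹ := by
      field_simp
    have e2 : -(2 * (1-z) ^ 1 * (-1)) / ((1-z)^2)^2 = 2*((1-z)^3)⁻¹ := by
      field_simp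
    rw [e1, e2]
  rw [hfun, hval]; exact h

end derivs

section ABCderivs

variable (a : ℝ) {d : ℝ}

lemma hasDerivAt_A (hd : d ∈ Set.Ioo (0:ℝ) 1) :
    HasDerivAt (fun d => A a d) (A1 a d) d := by
  have h := hasDerivAt_So' hd
  have hlin : HasDerivAt (fun d : ℝ => a - d) (-1) d := by
    simpa using (hasDerivAt_id d).const_sub a
  have h2 : HasDerivAt (fun d : ℝ => (1/2) * So'' a * (a-d)^2 - a * (So' a - So' d))
      ((1/2) * So'' a * (2*(a-d)^1*(-1)) - a * (-(So'' d))) d :=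
    ((hlin.pow 2).const_mul _).sub ((h.const_sub (So' a)).const_mul a)
  have hfun : (fun d => A a d)
      = fun d : ℝ => (1/2) * So'' a * (a-d)^2 - a * (So' a - So' d) :=
    funext fun x => by rw [A]
  have hval : A1 a d = (1/2) * So'' a * (2*(a-d)^1*(-1)) - a * (-(So'' d)) := by
    rw [A1]; ring
  rw [hfun, hval]; exact h2

lemma hasDerivAt_A1 (hd : d ∈ Set.Ioo (0:ℝ) 1) :
    HasDerivAt (fun d => A1 a d) (A2 a d) d := by
  have h := hasDerivAt_So'' hd
  have hlin : HasDerivAt (fun d : ℝ => a - d) (-1) d := by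
    simpa using (hasDerivAt_id d).const_sub a
  have h2 : HasDerivAt (fun d : ℝ => -(So'' a) * (a - d) + a * So'' d)
      (-(So'' a) * (-1) + a * So3 d) d :=
    (hlin.const_mul _).add (h.const_mul a)
  have hfun : (fun d => A1 a d) = fun d : ℝ => -(So'' a) * (a - d) + a * So'' d :=
    funext fun x => by rw [A1]
  have hval : A2 a d = -(So'' a) * (-1) + a * So3 d := by rw [A2]; ring
  rw [hfun, hval]; exact h2

lemma hasDerivAt_A2 (hd : d ∈ Set.Ioo (0:ℝ) 1) :
    HasDerivAt (fun d => A2 a d) (A3 a d) d := by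
  have h := hasDerivAt_So3 hd
  have h2 : HasDerivAt (fun d : ℝ => So'' a + a * So3 d) (a * So4 d) d := by
    simpa using (h.const_mul a).const_add (So'' a)
  have hfun : (fun d => A2 a d) = fun d : ℝ => So'' a + a * So3 d :=
    funext fun x => by rw [A2]
  have hval : A3 a d = a * So4 d := by rw [A3]
  rw [hfun, hval]; exact h2

lemma hasDerivAt_B (hd : d ∈ Set.Ioo (0:ℝ) 1) :
    HasDerivAt (fun d => B a d) (B1 a d) d := by
  have h := hasDerivAt_So' hd
  have hu : HasDerivAt (fun d : ℝ => -2 * (a + d)) (-2 * 1) d :=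
    ((hasDerivAt_id d).const_add a).const_mul (-2)
  have h2 : HasDerivAt (fun d : ℝ => -2 * (a + d) * (So' a - So' d))
      ((-2 * 1) * (So' a - So' d) + (-2 * (a + d)) * (-(So'' d))) d :=
    hu.mul (h.const_sub (So' a))
  have hfun : (fun d => B a d) = fun d : ℝ => -2 * (a + d) * (So' a - So' d) :=
    funext fun x => by rw [B]
  have hval : B1 a d = (-2 * 1) * (So' a - So' d) + (-2 * (a + d)) * (-(So'' d)) := by
    rw [B1]; ring
  rw [hfun, hval]; exact h2

lemma hasDerivAt_B1 (hd : d ∈ Set.Ioo (0:ℝ) 1) :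
    HasDerivAt (fun d => B1 a d) (B2 a d) d := by
  have h := hasDerivAt_So' hd
  have h'' := hasDerivAt_So'' hd
  have hu : HasDerivAt (fun d : ℝ => 2 * (a + d)) (2 * 1) d :=
    ((hasDerivAt_id d).const_add a).const_mul 2
  have h2 : HasDerivAt (fun d : ℝ => -2 * (So' a - So' d) + 2*(a+d) * So'' d)
      (-2 * (-(So'' d)) + ((2 * 1) * So'' d + (2*(a+d)) * So3 d)) d :=
    ((h.const_sub (So' a)).const_mul (-2)).add (hu.mul h'')
  have hfun : (fun d => B1 a d) = fun d : ℝ => -2 * (So' a - So' d) + 2*(a+d) * So'' d :=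
    funext fun x => by rw [B1]
  have hval : B2 a d = -2 * (-(So'' d)) + ((2 * 1) * So'' d + (2*(a+d)) * So3 d) := by
    rw [B2]; ring
  rw [hfun, hval]; exact h2

lemma hasDerivAt_B2 (hd : d ∈ Set.Ioo (0:ℝ) 1) :
    HasDerivAt (fun d => B2 a d) (B3 a d) d := by
  have h'' := hasDerivAt_So'' hd
  have h3' := hasDerivAt_So3 hd
  have hu : HasDerivAt (fun d : ℝ => 2 * (a + d)) (2 * 1) d :=
    ((hasDerivAt_id d).const_add a).const_mul 2
  have h2 : HasDerivAt (fun d : ℝ => 4 * So'' d + 2*(a+d) * So3 d)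
      (4 * So3 d + ((2 * 1) * So3 d + (2*(a+d)) * So4 d)) d :=
    (h''.const_mul 4).add (hu.mul h3')
  have hfun : (fun d => B2 a d) = fun d : ℝ => 4 * So'' d + 2*(a+d) * So3 d :=
    funext fun x => by rw [B2]
  have hval : B3 a d = 4 * So3 d + ((2 * 1) * So3 d + (2*(a+d)) * So4 d) := by
    rw [B3]; ring
  rw [hfun, hval]; exact h2

lemma hasDerivAt_C (hd : d ∈ Set.Ioo (0:ℝ) 1) :
    HasDerivAt (fun d => C a d) (C1 a d) d := by
  have hS := hasDerivAt_So hd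
  have h' := hasDerivAt_So' hd
  have h2 : HasDerivAt (fun d : ℝ => 4 * ((So a - a * So' a) - So d + d * So' d))
      (4 * ((-(So' d)) + (1 * So' d + d * So'' d))) d :=
    (((hS.const_sub (So a - a * So' a)).add ((hasDerivAt_id d).mul h')).const_mul 4)
  have hfun : (fun d => C a d) = fun d : ℝ => 4 * ((So a - a * So' a) - So d + d * So' d) :=
    funext fun x => by rw [C]
  have hval : C1 a d = 4 * ((-(So' d)) + (1 * So' d + d * So'' d)) := by
    rw [C1]; ring
  rw [hfun, hval]; exact h2

lemma hasDerivAt_C1 (hd : d ∈ Set.Ioo (0:ℝ) 1) :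
    HasDerivAt (fun d => C1 a d) (C2 a d) d := by
  have h'' := hasDerivAt_So'' hd
  have h3' := hasDerivAt_So3 hd
  have h2 : HasDerivAt (fun d : ℝ => 4 * d * So'' d)
      (4 * 1 * So'' d + 4 * d * So3 d) d :=
    (((hasDerivAt_id d).const_mul 4).mul h'')
  have hfun : (fun d => C1 a d) = fun d : ℝ => 4 * d * So'' d :=
    funext fun x => by rw [C1]
  have hval : C2 a d = 4 * 1 * So'' d + (4 * d) * So3 d := by
    rw [C2]; ring
  rw [hfun, hval]; exact h2

lemma hasDerivAt_C2 (hd : d ∈ Set.Ioo (0:ℝ) 1) :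
    HasDerivAt (fun d => C2 a d) (C3 a d) d := by
  have h'' := hasDerivAt_So'' hd
  have h3' := hasDerivAt_So3 hd
  have h2 : HasDerivAt (fun d : ℝ => 4 * So'' d + 4 * d * So3 d)
      (4 * So3 d + (4 * 1 * So3 d + (4 * d) * So4 d)) d :=
    (h''.const_mul 4).add (((hasDerivAt_id d).const_mul 4).mul h3')
  have hfun : (fun d => C2 a d) = fun d : ℝ => 4 * So'' d + 4 * d * So3 d :=
    funext fun x => by rw [C2]
  have hval : C3 a d = 4 * So3 d + (4 * 1 * So3 d + (4 * d) * So4 d) := by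
    rw [C3]; ring
  rw [hfun, hval]; exact h2

lemma hasDerivAt_Δ (hd : d ∈ Set.Ioo (0:ℝ) 1) :
    HasDerivAt (fun d => Δ a d) (D1 a d) d := by
  have hA := hasDerivAt_A a hd
  have hB := hasDerivAt_B a hd
  have hC := hasDerivAt_C a hd
  have h2 : HasDerivAt (fun d : ℝ => B a d ^ 2 - 4 * A a d * C a d)
      (2 * B a d ^ 1 * B1 a d - ((4 * A1 a d) * C a d + (4 * A a d) * C1 a d)) d :=
    (hB.pow 2).sub ((hA.const_mul 4).mul hC)
  have hfun : (fun d => Δ a d) = fun d : ℝ => B a d ^ 2 - 4 * A a d * C a d :=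
    funext fun x => by rw [Δ]
  have hval : D1 a d
      = 2 * B a d ^ 1 * B1 a d - ((4 * A1 a d) * C a d + (4 * A a d) * C1 a d) := by
    rw [D1]; ring
  rw [hfun, hval]; exact h2

lemma hasDerivAt_D1 (hd : d ∈ Set.Ioo (0:ℝ) 1) :
    HasDerivAt (fun d => D1 a d) (D2 a d) d := by
  have hA := hasDerivAt_A a hd
  have hA1 := hasDerivAt_A1 a hd
  have hB := hasDerivAt_B a hd
  have hB1 := hasDerivAt_B1 a hd
  have hC := hasDerivAt_C a hd
  have hC1 := hasDerivAt_C1 a hd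
  have h2 : HasDerivAt (fun d : ℝ => 2 * B a d * B1 a d - 4 * (A1 a d * C a d + A a d * C1 a d))
      (((2 * B1 a d) * B1 a d + (2 * B a d) * B2 a d)
        - 4 * ((A2 a d * C a d + A1 a d * C1 a d) + (A1 a d * C1 a d + A a d * C2 a d))) d :=
    ((hB.const_mul 2).mul hB1).sub
      (((hA1.mul hC).add (hA.mul hC1)).const_mul 4)
  have hfun : (fun d => D1 a d)
      = fun d : ℝ => 2 * B a d * B1 a d - 4 * (A1 a d * C a d + A a d * C1 a d) :=
    funext fun x => by rw [D1]
  have hval : D2 a d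
      = ((2 * B1 a d) * B1 a d + (2 * B a d) * B2 a d)
        - 4 * ((A2 a d * C a d + A1 a d * C1 a d) + (A1 a d * C1 a d + A a d * C2 a d)) := by
    rw [D2]; ring
  rw [hfun, hval]; exact h2

lemma hasDerivAt_D2 (hd : d ∈ Set.Ioo (0:ℝ) 1) :
    HasDerivAt (fun d => D2 a d) (D3 a d) d := by
  have hA := hasDerivAt_A a hd
  have hA1 := hasDerivAt_A1 a hd
  have hA2 := hasDerivAt_A2 a hd
  have hB := hasDerivAt_B a hd
  have hB1 := hasDerivAt_B1 a hd
  have hB2 := hasDerivAt_B2 a hd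
  have hC := hasDerivAt_C a hd
  have hC1 := hasDerivAt_C1 a hd
  have hC2 := hasDerivAt_C2 a hd
  have h2 : HasDerivAt (fun d : ℝ =>
      2 * (B1 a d)^2 + 2 * B a d * B2 a d
        - 4 * (A2 a d * C a d + 2 * A1 a d * C1 a d + A a d * C2 a d))
      ((2 * (2 * B1 a d ^ 1 * B2 a d) + ((2 * B a d) * B3 a d + (2 * B2 a d) * B1 a d)
          * 0 + ((2 * B1 a d) * B2 a d + (2 * B a d) * B3 a d))
        - 4 * (((A3 a d * C a d + A2 a d * C1 a d)
            + ((2 * A2 a d) * C1 a d + (2 * A1 a d) * C2 a d))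
            + (A1 a d * C2 a d + A a d * C3 a d))) d := by
    have hp1 : HasDerivAt (fun d : ℝ => 2 * (B1 a d)^2) (2 * (2 * B1 a d ^ 1 * B2 a d)) d :=
      (hB1.pow 2).const_mul 2
    have hp2 : HasDerivAt (fun d : ℝ => 2 * B a d * B2 a d)
        ((2 * B1 a d) * B2 a d + (2 * B a d) * B3 a d) d :=
      (hB.const_mul 2).mul hB2
    have hp3 : HasDerivAt (fun d : ℝ =>
        4 * (A2 a d * C a d + 2 * A1 a d * C1 a d + A a d * C2 a d))
        (4 * (((A3 a d * C a d + A2 a d * C1 a d)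
            + ((2 * A2 a d) * C1 a d + (2 * A1 a d) * C2 a d))
            + (A1 a d * C2 a d + A a d * C3 a d))) d :=
      (((hA2.mul hC).add ((hA1.const_mul 2).mul hC1)).add (hA.mul hC2)).const_mul 4
    have := (hp1.add hp2).sub hp3
    exact this.congr_deriv (by ring)
  have hfun : (fun d => D2 a d)
      = fun d : ℝ => 2 * (B1 a d)^2 + 2 * B a d * B2 a d
        - 4 * (A2 a d * C a d + 2 * A1 a d * C1 a d + A a d * C2 a d) :=
    funext fun x => by rw [D2]
  have hval : D3 a d
      = (2 * (2 * B1 a d ^ 1 * B2 a d) + ((2 * B a d) * B3 a d + (2 * B2 a d) * B1 a d)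
          * 0 + ((2 * B1 a d) * B2 a d + (2 * B a d) * B3 a d))
        - 4 * (((A3 a d * C a d + A2 a d * C1 a d)
            + ((2 * A2 a d) * C1 a d + (2 * A1 a d) * C2 a d))
            + (A1 a d * C2 a d + A a d * C3 a d)) := by
    rw [D3]; ring
  rw [hfun, hval]; exact h2

end ABCderivs

lemma D1_diag (a : ℝ) : D1 a a = 0 := by
  simp only [D1, A, B, C, A1, B1, C1]; ring

lemma D2_diag (a : ℝ) : D2 a a = 0 := by
  simp only [D2, A, B, C, A1, B1, C1, A2, B2, C2]; ring

lemma D3_diag (a : ℝ) : D3 a a = 0 := by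
  simp only [D3, A, B, C, A1, B1, C1, A2, B2, C2, A3, B3, C3]; ring

/-- The discriminant `Δ` vanishes to fourth order along the diagonal: the first,
second and third partial derivatives of `Δ a d` with respect to `d`, evaluated at
`d = a`, all vanish. -/
theorem discriminant_vanishes_to_fourth_order :
    ∀ a ∈ Set.Ioo (0:ℝ) 1,
      iteratedDeriv 1 (fun d => Δ a d) a = 0 ∧
      iteratedDeriv 2 (fun d => Δ a d) a = 0 ∧
      iteratedDeriv 3 (fun d => Δ a d) a = 0 := by
  intro a ha
  set f : ℝ → ℝ := fun d => Δ a d with hf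
  have e1 : ∀ d ∈ Set.Ioo (0:ℝ) 1, deriv f =ᶠ[nhds d] fun x => D1 a x := by
    intro d hd
    filter_upwards [isOpen_Ioo.mem_nhds hd] with x hx
    exact (hasDerivAt_Δ a hx).deriv
  have e2 : ∀ d ∈ Set.Ioo (0:ℝ) 1, deriv (deriv f) =ᶠ[nhds d] fun x => D2 a x := by
    intro d hd
    filter_upwards [isOpen_Ioo.mem_nhds hd] with x hx
    rw [(e1 x hx).deriv_eq]
    exact (hasDerivAt_D1 a hx).deriv
  have h1 : iteratedDeriv 1 f a = 0 := by
    rw [iteratedDeriv_one, (hasDerivAt_Δ a ha).deriv, D1_diag]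
  have h2 : iteratedDeriv 2 f a = 0 := by
    rw [show (2:ℕ) = 1 + 1 from rfl, iteratedDeriv_succ, iteratedDeriv_one]
    rw [(e1 a ha).deriv_eq, (hasDerivAt_D1 a ha).deriv, D2_diag]
  have h3 : iteratedDeriv 3 f a = 0 := by
    rw [show (3:ℕ) = 2 + 1 from rfl, iteratedDeriv_succ,
      show (2:ℕ) = 1 + 1 from rfl, iteratedDeriv_succ, iteratedDeriv_one]
    rw [(e2 a ha).deriv_eq, (hasDerivAt_D2 a ha).deriv, D3_diag]
  exact ⟨h1, h2, h3⟩
end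

section
/- For every z in (0,1), the series Σ_{n=0}^∞ 4ⁿ (z − 1/2)^{2n+2} / ((n+1)(2n+1)) converges with sum (log 2)/2 − S_o(z); equivalently, S_o(z) = (log 2)/2 − Σ_{n=0}^∞ 4ⁿ (z − 1/2)^{2n+2} / ((n+1)(2n+1)). -/
open Real

/-- For every `z ∈ (0,1)`, `Σ_{n=0}^∞ 4ⁿ (z − 1/2)^{2n+2} / ((n+1)(2n+1))`
converges with sum `(log 2)/2 − S_o(z)`. -/
theorem So_series_expansion :
    ∀ z ∈ Set.Ioo (0:ℝ) 1,
      HasSum (fun n : ℕ => 4^n * (z - 1/2)^(2*n + 2) / (((n:ℝ) + 1) * (2*(n:ℝ) + 1)))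
        (Real.log 2 / 2 - So z) := by
  rintro z ⟨hz0, hz1⟩
  set y : ℝ := 2*z - 1 with hy
  have hyabs : |y| < 1 := by rw [abs_lt]; constructor <;> [linarith; linarith]
  have hy2 : |y^2| < 1 := by
    rw [abs_pow]
    exact pow_lt_one₀ (abs_nonneg y) hyabs two_ne_zero
  have hA := (Real.hasSum_log_sub_log_of_abs_lt_one hyabs).mul_left (y/4)
  have hB := (Real.hasSum_pow_div_log_of_abs_lt_one hy2).mul_left (1/4)
  have hS := hA.sub hB
  have hfun : (fun k : ℕ => y/4 * ((2:ℝ) * (1 / (2 * k + 1)) * y ^ (2 * k + 1)) -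
      1/4 * ((y^2) ^ (k + 1) / (k + 1)))
      = fun n : ℕ => 4^n * (z - 1/2)^(2*n + 2) / (((n:ℝ) + 1) * (2*(n:ℝ) + 1)) := by
    funext n
    have hz : z - 1/2 = y/2 := by rw [hy]; ring
    have h1 : (0:ℝ) < (n:ℝ) + 1 := by positivity
    have h2 : (0:ℝ) < 2*(n:ℝ) + 1 := by positivity
    have e2 : ((y^2):ℝ) ^ (n+1) = y ^ (2*n+2) := by
      rw [← pow_mul, show 2*(n+1) = 2*n+2 from by ring]
    have e3 : (y/2) ^ (2*n+2) = y^(2*n+2) / (4 * 4^n) := by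
      rw [div_pow]
      congr 1
      rw [show 2*n+2 = 2*(n+1) from by ring, pow_mul]
      norm_num [pow_succ, mul_comm]
    have e1 : y * y ^ (2*n+1) = y ^ (2*n+2) := by rw [← pow_succ']
    rw [hz, e2, e3]
    field_simp
    rw [← e1]
    ring
  rw [hfun] at hS
  convert hS using 1
  · rfl
  have h1y : 1 + y = 2*z := by ring
  have h2y : 1 - y = 2*(1-z) := by ring
  have h3y : 1 - y^2 = (2*z)*(2*(1-z)) := by ring
  rw [h1y, h2y, h3y, Real.log_mul (by linarith : (0:ℝ) < 2*z).ne' (by linarith : (0:ℝ) < 2*(1-z)).ne',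
    Real.log_mul two_ne_zero hz0.ne', Real.log_mul two_ne_zero (by linarith : (0:ℝ) < 1-z).ne', So, hy]
  ring
end

section
/- The stationarity function f is antisymmetric under the bipodal relabeling symmetry: for all a, b, d in (0,1) and c in (0,1), f(b, a, 1−c, d) = −f(a, b, c, d); in particular, for all a, d in (0,1), f(a, a, 1/2, d) = 0, so the symmetric bipodal graphon (a = b, c = 1/2) is always a stationary point of the constrained entropy. -/
open Real

noncomputable def f (a b c d : ℝ) : ℝ :=
  So' a * (c * d * (a - d) - (1 - c) * b * (b - d)) +
  So' b * (c * a * (a - d) - (1 - c) * d * (b - d)) +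
  So' d * (c * (d^2 - a^2) + (1 - c) * (b^2 - d^2))

/-- `f` is antisymmetric under the bipodal relabeling symmetry `(a,b,c,d) ↦ (b,a,1−c,d)`;
in particular the symmetric bipodal graphon (`a = b`, `c = 1/2`) is always a stationary
point of the constrained entropy. -/
theorem f_antisymmetric :
    (∀ a ∈ Set.Ioo (0:ℝ) 1, ∀ b ∈ Set.Ioo (0:ℝ) 1, ∀ d ∈ Set.Ioo (0:ℝ) 1,
      ∀ c ∈ Set.Ioo (0:ℝ) 1, f b a (1 - c) d = -f a b c d) ∧
    (∀ a ∈ Set.Ioo (0:ℝ) 1, ∀ d ∈ Set.Ioo (0:ℝ) 1, f a a (1/2) d = 0) := by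
  constructor
  · intro a _ b _ d _ c _; unfold f; ring
  · intro a _ d _; unfold f; ring
end

section
/- The symmetric bipodal graphon realizes prescribed edge and triangle densities: let 0 < ε < 1 and let τ ≤ ε³ be such that, setting δ = (ε³ − τ)^{1/3}, one has 0 < ε − δ and ε + δ < 1. Then the bipodal graphon with parameters a = b = ε − δ, c = 1/2, d = ε + δ has edge density exactly ε (i.e. the double integral over [0,1]² of the graphon equals ε) and triangle density exactly τ (i.e. the triple integral over [0,1]³ of g(x,y)g(y,z)g(z,x) equals τ). Equivalently, for a symmetric bipodal graphon (a = b, c = 1/2) the densities satisfy ε = (a + d)/2 and τ − ε³ = (a − d)³/8. -/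
open Real

/-- The bipodal graphon with parameters `(a, b, c, d)`. -/
noncomputable def bipodal (a b c d : ℝ) (x y : ℝ) : ℝ :=
  if x < c ∧ y < c then a else if c < x ∧ c < y then b else d

open MeasureTheory in
lemma ae_ne_half : ∀ᵐ (y:ℝ), y ≠ 1/2 := by
  refine MeasureTheory.ae_iff.2 ?_
  simpa using Real.volume_singleton (a := 1/2)

open MeasureTheory in
lemma step_int (p q : ℝ) (f : ℝ → ℝ) (hf : ∀ y : ℝ, y ≠ 1/2 → f y = if y < 1/2 then p else q) :
    (∫ y in (0:ℝ)..1, f y) = (p + q) / 2 := by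
  have h1 : (∫ y in (0:ℝ)..1, f y)
      = ∫ y in (0:ℝ)..1, (Set.indicator {x | x ≤ (1/2:ℝ)} (fun _ => p - q) y + q) := by
    refine intervalIntegral.integral_congr_ae ?_
    filter_upwards [ae_ne_half] with y hy _
    rcases lt_trichotomy y (1/2) with h | h | h
    · rw [hf y hy, if_pos h, Set.indicator_of_mem (by exact h.le)]
      ring
    · exact absurd h hy
    · rw [hf y hy, if_neg (not_lt.2 h.le), Set.indicator_of_notMem (by exact not_le.2 h)]
      ring
  rw [h1]
  have hint : IntervalIntegrable (fun y => Set.indicator {x | x ≤ (1/2:ℝ)} (fun _ => p - q) y)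
      volume 0 1 := by
    rw [intervalIntegrable_iff]
    refine (MeasureTheory.integrableOn_const ?_).indicator measurableSet_Iic
    simp [Set.uIoc, Real.volume_Ioc]
  rw [intervalIntegral.integral_add hint intervalIntegrable_const,
    intervalIntegral.integral_indicator (by norm_num : (1/2:ℝ) ∈ Set.Icc (0:ℝ) 1)]
  simp
  ring

lemma edge_int (a d : ℝ) :
    (∫ x in (0:ℝ)..1, ∫ y in (0:ℝ)..1, bipodal a a (1/2) d x y) = (a + d) / 2 := by
  have hx : ∀ x : ℝ, x ≠ 1/2 →
      (∫ y in (0:ℝ)..1, bipodal a a (1/2) d x y) = (a + d) / 2 := by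
    intro x hx
    rcases lt_or_gt_of_ne hx with h1 | h1
    · rw [step_int a d _ ?_]
      intro y hy
      rcases lt_or_gt_of_ne hy with h2 | h2 <;>
        simp [bipodal, h1, h2, asymm h1, asymm h2, -one_div]
    · rw [step_int d a _ ?_]
      · ring
      intro y hy
      rcases lt_or_gt_of_ne hy with h2 | h2 <;>
        simp [bipodal, h1, h2, asymm h1, asymm h2, -one_div]
  rw [step_int ((a+d)/2) ((a+d)/2) _ (fun x hx' => by rw [hx x hx', ite_self])]
  ring

lemma tri_int (a d : ℝ) :
    (∫ x in (0:ℝ)..1, ∫ y in (0:ℝ)..1, ∫ z in (0:ℝ)..1,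
      bipodal a a (1/2) d x y * bipodal a a (1/2) d y z * bipodal a a (1/2) d z x)
      = (a^3 + 3*a*d^2) / 4 := by
  set g := bipodal a a (1/2) d with hg
  have key : ∀ x y : ℝ, x ≠ 1/2 → y ≠ 1/2 →
      (∫ z in (0:ℝ)..1, g x y * g y z * g z x)
        = g x y * (((if y < 1/2 then a else d) * (if x < 1/2 then a else d)
            + (if y < 1/2 then d else a) * (if x < 1/2 then d else a)) / 2) := by
    intro x y hx hy
    simp only [mul_assoc]
    rw [intervalIntegral.integral_const_mul]
    congr 1
    refine step_int _ _ _ ?_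
    intro z hz
    rcases lt_or_gt_of_ne hx with h1 | h1 <;> rcases lt_or_gt_of_ne hy with h2 | h2 <;>
      rcases lt_or_gt_of_ne hz with h3 | h3 <;>
      simp [hg, bipodal, h1, h2, h3, asymm h1, asymm h2, asymm h3, -one_div]
  have mid : ∀ x : ℝ, x ≠ 1/2 →
      (∫ y in (0:ℝ)..1, ∫ z in (0:ℝ)..1, g x y * g y z * g z x)
        = (a^3 + 3*a*d^2) / 4 := by
    intro x hx
    rcases lt_or_gt_of_ne hx with h1 | h1
    · rw [step_int (a * ((a*a + d*d)/2)) (d * ((d*a + a*d)/2)) _ ?_]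
      · ring
      intro y hy
      rw [key x y hx hy]
      rcases lt_or_gt_of_ne hy with h2 | h2 <;>
        simp [hg, bipodal, h1, h2, asymm h1, asymm h2, -one_div]
    · rw [step_int (d * ((a*d + d*a)/2)) (a * ((d*d + a*a)/2)) _ ?_]
      · ring
      intro y hy
      rw [key x y hx hy]
      rcases lt_or_gt_of_ne hy with h2 | h2 <;>
        simp [hg, bipodal, h1, h2, asymm h1, asymm h2, -one_div]
  rw [step_int ((a^3 + 3*a*d^2)/4) ((a^3 + 3*a*d^2)/4) _
    (fun x hx => by rw [mid x hx, ite_self])]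
  ring

/-- The symmetric bipodal graphon with `a = b = ε − δ`, `c = 1/2`, `d = ε + δ`, where
`δ = (ε³ − τ)^{1/3}`, has edge density exactly `ε` and triangle density exactly `τ`. -/
theorem symmetric_bipodal_realizes_densities (ε τ : ℝ)
    (hε : 0 < ε ∧ ε < 1) (hτ : τ ≤ ε^3)
    (hlo : 0 < ε - (ε^3 - τ) ^ ((1:ℝ)/3))
    (hhi : ε + (ε^3 - τ) ^ ((1:ℝ)/3) < 1) :
    (∫ x in (0:ℝ)..1, ∫ y in (0:ℝ)..1,
        bipodal (ε - (ε^3 - τ) ^ ((1:ℝ)/3)) (ε - (ε^3 - τ) ^ ((1:ℝ)/3)) (1/2)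
          (ε + (ε^3 - τ) ^ ((1:ℝ)/3)) x y) = ε ∧
    (∫ x in (0:ℝ)..1, ∫ y in (0:ℝ)..1, ∫ z in (0:ℝ)..1,
        bipodal (ε - (ε^3 - τ) ^ ((1:ℝ)/3)) (ε - (ε^3 - τ) ^ ((1:ℝ)/3)) (1/2)
            (ε + (ε^3 - τ) ^ ((1:ℝ)/3)) x y *
          bipodal (ε - (ε^3 - τ) ^ ((1:ℝ)/3)) (ε - (ε^3 - τ) ^ ((1:ℝ)/3)) (1/2)
            (ε + (ε^3 - τ) ^ ((1:ℝ)/3)) y z *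
          bipodal (ε - (ε^3 - τ) ^ ((1:ℝ)/3)) (ε - (ε^3 - τ) ^ ((1:ℝ)/3)) (1/2)
            (ε + (ε^3 - τ) ^ ((1:ℝ)/3)) z x) = τ ∧
    ε = ((ε - (ε^3 - τ) ^ ((1:ℝ)/3)) + (ε + (ε^3 - τ) ^ ((1:ℝ)/3))) / 2 ∧
    τ - ε^3 = ((ε - (ε^3 - τ) ^ ((1:ℝ)/3)) - (ε + (ε^3 - τ) ^ ((1:ℝ)/3)))^3 / 8 := by
  set δ : ℝ := (ε^3 - τ) ^ ((1:ℝ)/3) with hδ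
  have hδ3 : δ^3 = ε^3 - τ := by
    rw [hδ, ← Real.rpow_natCast ((ε^3 - τ) ^ ((1:ℝ)/3)) 3,
      ← Real.rpow_mul (sub_nonneg.2 hτ)]
    norm_num
  refine ⟨?_, ?_, by ring, ?_⟩
  · rw [edge_int]; ring
  · rw [tri_int]; linear_combination -hδ3
  · linear_combination hδ3
end

section
/- First and second derivatives of the edge and triangle densities along a symmetric curve: let a, b, d : ℝ → ℝ be twice differentiable at c = 1/2 with b(1/2) = a(1/2), b'(1/2) = −a'(1/2), b''(1/2) = a''(1/2), and d'(1/2) = 0. Define ε(c) = c²a(c) + 2c(1−c)d(c) + (1−c)²b(c) and τ(c) = c³a(c)³ + 3c²(1−c)a(c)d(c)² + 3c(1−c)²b(c)d(c)² + (1−c)³b(c)³. Then ε'(1/2) = 0, τ'(1/2) = 0, ε''(1/2) = (1/2)(a'' + d'') + 4a' + 4(a − d), and τ''(1/2) = (3/4)·((a² + d²)a'' + 2ad·d'') + (3/2)·a·a'² + 3(3a² + d²)·a' + 6a(a² − d²), where a, d, a', a'', d'' are evaluated at c = 1/2. -/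
open Real Filter

/-- Explicit first derivative of the edge density. -/
noncomputable def epsD (a d b a' d' b' : ℝ → ℝ) : ℝ → ℝ := fun x =>
  2*x*a x + x^2*a' x + (2-4*x)*d x + 2*x*(1-x)*d' x + (2*x-2)*b x + (1-x)^2*b' x

/-- Explicit first derivative of the triangle density. -/
noncomputable def tauD (a d b a' d' b' : ℝ → ℝ) : ℝ → ℝ := fun x =>
  3*x^2*(a x)^3 + 3*x^3*(a x)^2*a' x
  + (6*x - 9*x^2)*a x*(d x)^2 + (3*x^2 - 3*x^3)*a' x*(d x)^2 + (6*x^2 - 6*x^3)*a x*d x*d' x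
  + (3*(1-x)^2 - 6*x*(1-x))*b x*(d x)^2 + 3*x*(1-x)^2*b' x*(d x)^2
  + 6*x*(1-x)^2*b x*d x*d' x
  + (-3)*(1-x)^2*(b x)^3 + 3*(1-x)^3*(b x)^2*b' x

/-- First and second derivatives of the edge and triangle densities along a symmetric
curve of bipodal parameters, evaluated at `c = 1/2`. -/
theorem edge_triangle_derivs_along_symmetric_curve
    (a b d a' b' d' : ℝ → ℝ) (a'' b'' d'' : ℝ)
    (ha1 : ∀ᶠ c in nhds (1/2 : ℝ), HasDerivAt a (a' c) c)
    (hb1 : ∀ᶠ c in nhds (1/2 : ℝ), HasDerivAt b (b' c) c)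
    (hd1 : ∀ᶠ c in nhds (1/2 : ℝ), HasDerivAt d (d' c) c)
    (ha2 : HasDerivAt a' a'' (1/2)) (hb2 : HasDerivAt b' b'' (1/2))
    (hd2 : HasDerivAt d' d'' (1/2))
    (hba : b (1/2) = a (1/2)) (hb' : b' (1/2) = -(a' (1/2))) (hb'' : b'' = a'')
    (hd' : d' (1/2) = 0) :
    deriv (fun c => c^2 * a c + 2 * c * (1 - c) * d c + (1 - c)^2 * b c) (1/2) = 0 ∧
    deriv (fun c => c^3 * (a c)^3 + 3 * c^2 * (1 - c) * a c * (d c)^2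
        + 3 * c * (1 - c)^2 * b c * (d c)^2 + (1 - c)^3 * (b c)^3) (1/2) = 0 ∧
    deriv (deriv (fun c => c^2 * a c + 2 * c * (1 - c) * d c + (1 - c)^2 * b c)) (1/2)
      = (1/2) * (a'' + d'') + 4 * a' (1/2) + 4 * (a (1/2) - d (1/2)) ∧
    deriv (deriv (fun c => c^3 * (a c)^3 + 3 * c^2 * (1 - c) * a c * (d c)^2
        + 3 * c * (1 - c)^2 * b c * (d c)^2 + (1 - c)^3 * (b c)^3)) (1/2)
      = (3/4) * (((a (1/2))^2 + (d (1/2))^2) * a'' + 2 * a (1/2) * d (1/2) * d'')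
          + (3/2) * a (1/2) * (a' (1/2))^2
          + 3 * (3 * (a (1/2))^2 + (d (1/2))^2) * a' (1/2)
          + 6 * a (1/2) * ((a (1/2))^2 - (d (1/2))^2) := by
  have h3 := (ha1.and hb1).and hd1
  -- first derivative of ε, eventually
  have hE : ∀ᶠ c in nhds (1/2 : ℝ),
      HasDerivAt (fun c => c^2 * a c + 2 * c * (1 - c) * d c + (1 - c)^2 * b c)
        (epsD a d b a' d' b' c) c := by
    filter_upwards [h3] with c hc
    obtain ⟨⟨hac, hbc⟩, hdc⟩ := hc
    have one_sub : HasDerivAt (fun y : ℝ => 1 - y) (-1) c := by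
      simpa using (hasDerivAt_id c).const_sub 1
    have H := (((hasDerivAt_pow 2 c).mul hac).add
        ((((hasDerivAt_id c).const_mul 2).mul one_sub).mul hdc)).add
      ((one_sub.pow 2).mul hbc)
    refine H.congr_deriv ?_
    simp only [epsD, id_eq, Pi.mul_apply, Pi.add_apply, Pi.sub_apply, Pi.pow_apply, Pi.neg_apply]
    push_cast
    ring
  -- first derivative of τ, eventually
  have hT : ∀ᶠ c in nhds (1/2 : ℝ),
      HasDerivAt (fun c => c^3 * (a c)^3 + 3 * c^2 * (1 - c) * a c * (d c)^2
          + 3 * c * (1 - c)^2 * b c * (d c)^2 + (1 - c)^3 * (b c)^3)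
        (tauD a d b a' d' b' c) c := by
    filter_upwards [h3] with c hc
    obtain ⟨⟨hac, hbc⟩, hdc⟩ := hc
    have one_sub : HasDerivAt (fun y : ℝ => 1 - y) (-1) c := by
      simpa using (hasDerivAt_id c).const_sub 1
    have H := ((((hasDerivAt_pow 3 c).mul (hac.pow 3)).add
        (((((hasDerivAt_pow 2 c).const_mul 3).mul one_sub).mul hac).mul (hdc.pow 2))).add
        (((((hasDerivAt_id c).const_mul 3).mul (one_sub.pow 2)).mul hbc).mul (hdc.pow 2))).add
      ((one_sub.pow 3).mul (hbc.pow 3))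
    refine H.congr_deriv ?_
    simp only [tauD, id_eq, Pi.mul_apply, Pi.add_apply, Pi.sub_apply, Pi.pow_apply, Pi.neg_apply]
    push_cast
    ring
  have ha0 : HasDerivAt a (a' (1/2)) (1/2) := ha1.self_of_nhds
  have hb0 : HasDerivAt b (b' (1/2)) (1/2) := hb1.self_of_nhds
  have hd0 : HasDerivAt d (d' (1/2)) (1/2) := hd1.self_of_nhds
  have one_sub : HasDerivAt (fun y : ℝ => 1 - y) (-1) (1/2) := by
    simpa using (hasDerivAt_id (1/2 : ℝ)).const_sub 1
  -- second derivative of ε at 1/2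
  have HE2 := (((((((hasDerivAt_id (1/2:ℝ)).const_mul 2).mul ha0).add
      ((hasDerivAt_pow 2 (1/2:ℝ)).mul ha2)).add
      ((((hasDerivAt_id (1/2:ℝ)).const_mul 4).const_sub 2).mul hd0)).add
      ((((hasDerivAt_id (1/2:ℝ)).const_mul 2).mul one_sub).mul hd2)).add
      ((((hasDerivAt_id (1/2:ℝ)).const_mul 2).sub_const 2).mul hb0)).add
      ((one_sub.pow 2).mul hb2)
  have hE2 : HasDerivAt (epsD a d b a' d' b') _ (1/2) :=
    HE2.congr_of_eventuallyEq (Filter.Eventually.of_forall fun y => by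
      simp only [epsD, id_eq, Pi.mul_apply, Pi.add_apply, Pi.sub_apply, Pi.pow_apply, Pi.neg_apply]; try (push_cast; ring))
  -- second derivative of τ at 1/2
  have t1 := ((hasDerivAt_pow 2 (1/2:ℝ)).const_mul 3).mul (ha0.pow 3)
  have t2 := ((hasDerivAt_pow 3 (1/2:ℝ)).const_mul 3).mul ((ha0.pow 2).mul ha2)
  have t3 := (((hasDerivAt_id (1/2:ℝ)).const_mul 6).sub
      ((hasDerivAt_pow 2 (1/2:ℝ)).const_mul 9)).mul (ha0.mul (hd0.pow 2))
  have t4 := (((hasDerivAt_pow 2 (1/2:ℝ)).const_mul 3).sub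
      ((hasDerivAt_pow 3 (1/2:ℝ)).const_mul 3)).mul (ha2.mul (hd0.pow 2))
  have t5 := (((hasDerivAt_pow 2 (1/2:ℝ)).const_mul 6).sub
      ((hasDerivAt_pow 3 (1/2:ℝ)).const_mul 6)).mul (ha0.mul (hd0.mul hd2))
  have t6 := (((one_sub.pow 2).const_mul 3).sub
      (((hasDerivAt_id (1/2:ℝ)).mul one_sub).const_mul 6)).mul (hb0.mul (hd0.pow 2))
  have t7 := (((hasDerivAt_id (1/2:ℝ)).mul (one_sub.pow 2)).const_mul 3).mul
      (hb2.mul (hd0.pow 2))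
  have t8 := (((hasDerivAt_id (1/2:ℝ)).mul (one_sub.pow 2)).const_mul 6).mul
      (hb0.mul (hd0.mul hd2))
  have t9 := ((one_sub.pow 2).const_mul (-3)).mul (hb0.pow 3)
  have t10 := ((one_sub.pow 3).const_mul 3).mul ((hb0.pow 2).mul hb2)
  have HT2 := ((((((((t1.add t2).add t3).add t4).add t5).add t6).add t7).add t8).add t9).add t10
  have hT2 : HasDerivAt (tauD a d b a' d' b') _ (1/2) :=
    HT2.congr_of_eventuallyEq (Filter.Eventually.of_forall fun y => by
      simp only [tauD, id_eq, Pi.mul_apply, Pi.add_apply, Pi.sub_apply, Pi.pow_apply, Pi.neg_apply]; try (push_cast; ring))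
  have hEeq : deriv (fun c => c^2 * a c + 2 * c * (1 - c) * d c + (1 - c)^2 * b c)
      =ᶠ[nhds (1/2:ℝ)] epsD a d b a' d' b' := hE.mono fun c hc => hc.deriv
  have hTeq : deriv (fun c => c^3 * (a c)^3 + 3 * c^2 * (1 - c) * a c * (d c)^2
        + 3 * c * (1 - c)^2 * b c * (d c)^2 + (1 - c)^3 * (b c)^3)
      =ᶠ[nhds (1/2:ℝ)] tauD a d b a' d' b' := hT.mono fun c hc => hc.deriv
  refine ⟨?_, ?_, ?_, ?_⟩
  · rw [hE.self_of_nhds.deriv]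
    simp only [epsD]
    rw [hba, hb', hd']
    ring
  · rw [hT.self_of_nhds.deriv]
    simp only [tauD]
    rw [hba, hb', hd']
    ring
  · rw [hEeq.deriv_eq, hE2.deriv]
    rw [hba, hb', hb'', hd']
    simp only [id_eq]
    push_cast
    norm_num
    ring
  · rw [hTeq.deriv_eq, hT2.deriv]
    simp only [Pi.mul_apply, Pi.add_apply, Pi.sub_apply, Pi.pow_apply, Pi.neg_apply]
    rw [hba, hb', hb'', hd']
    simp only [id_eq]
    push_cast
    norm_num
    ring
end
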